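/- Let n ≥ 3. Every (<-1)-play from ρ^(0) ending at a configuration having no coordinate strictly less than -1 ends at the configuration -ρ^(ι0) and has length exactly binomial(n,3); moreover, such a play exists. (In particular, the involution ι on extending vertices of the extended Dynkin graph of type Ã_{n-1} is trivial when n is odd and is the antipodal map of the cycle when n is even.) -/
import Mathlib

/-- The affine Cartan matrix of type `Ã_{n-1}`, indexed by `ZMod n`. -/
def A (n : ℕ) (i j : ZMod n) : ℤ :=
  if i = j then 2 else if j = i + 1 ∨ j = i - 1 then -1 else 0

/-- Firing vertex `i` in type `Ã_{n-1}`. -/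
def fire (n : ℕ) (i : ZMod n) (v : ZMod n → ℝ) : ZMod n → ℝ :=
  fun j => v j - (A n i j : ℝ) * v i

/-- The configuration resulting from firing the vertices in the list `l` successively. -/
def playResult (n : ℕ) : (ZMod n → ℝ) → List (ZMod n) → (ZMod n → ℝ)
  | v, [] => v
  | v, i :: l => playResult n (fire n i v) l

/-- `IsPlay n θ v l` : the list `l` is a sequence of successive firings starting at `v`
in which each fired vertex has amplitude strictly less than `θ` at the time it is fired.
With `θ = 0` this is a legal play; with `θ = -1` a `(<-1)`-play. -/
def IsPlay (n : ℕ) (θ : ℝ) : (ZMod n → ℝ) → List (ZMod n) → Prop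
  | _, [] => True
  | v, i :: l => v i < θ ∧ IsPlay n θ (fire n i v) l

/-- The configuration `ρ^(a)` : value `-(n-1)` at `a` and `1` elsewhere. -/
def rho (n : ℕ) (a : ZMod n) : ZMod n → ℝ :=
  fun j => if j = a then 1 - (n : ℝ) else 1

/-- The extending vertex `ι0`: the class of `n/2` if `n` is even, and `0` if `n` is odd. -/
def iota0 (n : ℕ) : ZMod n :=
  if Even n then ((n / 2 : ℕ) : ZMod n) else 0

set_option linter.unusedSectionVars false

section Machinery

variable {n : ℕ} [NeZero n]

/- ### basic play API -/

@[simp] lemma playResult_nil (v : ZMod n → ℝ) : playResult n v [] = v := rfl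

@[simp] lemma playResult_cons (v : ZMod n → ℝ) (i : ZMod n) (l : List (ZMod n)) :
    playResult n v (i :: l) = playResult n (fire n i v) l := rfl

@[simp] lemma IsPlay_nil (θ : ℝ) (v : ZMod n → ℝ) : IsPlay n θ v [] := trivial

lemma IsPlay_cons (θ : ℝ) (v : ZMod n → ℝ) (i : ZMod n) (l : List (ZMod n)) :
    IsPlay n θ v (i :: l) ↔ v i < θ ∧ IsPlay n θ (fire n i v) l := Iff.rfl

lemma playResult_append (v : ZMod n → ℝ) (l₁ l₂ : List (ZMod n)) :
    playResult n v (l₁ ++ l₂) = playResult n (playResult n v l₁) l₂ := by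
  induction l₁ generalizing v with
  | nil => rfl
  | cons i l ih => simp [ih]

lemma IsPlay_append (θ : ℝ) (v : ZMod n → ℝ) (l₁ l₂ : List (ZMod n)) :
    IsPlay n θ v (l₁ ++ l₂) ↔ IsPlay n θ v l₁ ∧ IsPlay n θ (playResult n v l₁) l₂ := by
  induction l₁ generalizing v with
  | nil => simp
  | cons i l ih => simp [IsPlay_cons, ih, and_assoc]

/- ### Cartan matrix facts -/

lemma A_self (i : ZMod n) : A n i i = 2 := by simp [A]

lemma A_symm (i j : ZMod n) : A n i j = A n j i := by
  rcases eq_or_ne i j with rfl | hij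
  · rfl
  · have h : (j = i + 1 ∨ j = i - 1) ↔ (i = j + 1 ∨ i = j - 1) := by
      constructor
      · rintro (rfl | rfl)
        · right; ring
        · left; ring
      · rintro (rfl | rfl)
        · right; ring
        · left; ring
    simp only [A, if_neg hij, if_neg (Ne.symm hij), h]

lemma A_dichotomy (i j : ZMod n) (hij : i ≠ j) : A n i j = -1 ∨ A n i j = 0 := by
  unfold A
  rw [if_neg hij]
  split_ifs <;> simp

/- ### diamond lemmas -/

lemma fire_comm (i j : ZMod n) (h : A n i j = 0) (v : ZMod n → ℝ) :
    fire n i (fire n j v) = fire n j (fire n i v) := by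
  have h' : A n j i = 0 := by rw [← A_symm]; exact h
  funext k
  simp only [fire, h, h']
  push_cast [h, h']
  ring

lemma fire_at_self (i : ZMod n) (v : ZMod n → ℝ) : fire n i v i = -(v i) := by
  simp [fire, A_self]; ring

lemma fire_adj_i (i j : ZMod n) (h : A n i j = -1) (v : ZMod n → ℝ) :
    fire n j (fire n i v) i = v j := by
  have h' : A n j i = -1 := by rw [← A_symm]; exact h
  simp only [fire, A_self, h, h']
  push_cast
  ring

lemma fire_braid (i j : ZMod n) (h : A n i j = -1) (v : ZMod n → ℝ) :
    fire n i (fire n j (fire n i v)) = fire n j (fire n i (fire n j v)) := by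
  have h' : A n j i = -1 := by rw [← A_symm]; exact h
  funext k
  simp only [fire, A_self, h, h']
  push_cast
  ring

/- ### confluence -/

lemma conf (L : ℕ) :
    ∀ (v : ZMod n → ℝ) (p : List (ZMod n)), IsPlay n (-1) v p →
      (∀ j, -1 ≤ playResult n v p j) → p.length = L →
      ∀ q, IsPlay n (-1) v q →
        ∃ s, IsPlay n (-1) v (q ++ s) ∧
          playResult n v (q ++ s) = playResult n v p ∧ (q ++ s).length = L := by
  induction L with
  | zero =>
    intro v p hp hterm hlen q hq
    have hpnil : p = [] := List.length_eq_zero_iff.mp hlen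
    subst hpnil
    match q with
    | [] => exact ⟨[], trivial, rfl, rfl⟩
    | i :: q' =>
      exact absurd (hterm i) (not_le.mpr (hq.1.trans_le (by norm_num)))
  | succ L ih =>
    intro v p hp hterm hlen q hq
    match p, hp with
    | i :: p', ⟨hvi, hp'⟩ =>
      have hlen' : p'.length = L := by simpa using hlen
      match q, hq with
      | [], _ =>
        exact ⟨i :: p', ⟨hvi, hp'⟩, rfl, hlen⟩
      | j :: q', ⟨hvj, hq'⟩ =>
        by_cases hij : j = i
        · subst hij
          obtain ⟨s, h1, h2, h3⟩ := ih (fire n j v) p' hp' hterm hlen' q' hq'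
          exact ⟨s, ⟨hvj, h1⟩, h2, by simpa using h3⟩
        · rcases A_dichotomy i j (Ne.symm hij) with hA | hA
          · -- adjacent case, braid
            -- from (fire i v), the play [j, i] is legal
            have hA' : A n j i = -1 := by rw [← A_symm]; exact hA
            have hfij : fire n i v j = v j + v i := by
              simp only [fire, hA]; push_cast; ring
            have leg1 : fire n i v j < -1 := by
              rw [hfij]; nlinarith [hvi, hvj]
            have leg2 : fire n j (fire n i v) i < -1 := by
              rw [fire_adj_i i j hA v]; exact hvj
            obtain ⟨s1, h1, h2, h3⟩ := ih (fire n i v) p' hp' hterm hlen' [j, i]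
              ⟨leg1, leg2, trivial⟩
            -- s1 : play from fire i v extending [j,i], i.e. j :: i :: t
            match s1, h1, h2, h3 with
            | t, ⟨_, hti, ht⟩, h2, h3 =>
              -- h1 : IsPlay (fire i v) ([j,i] ++ t)
              -- build play i :: j :: t from (fire j v)
              have hfji : fire n j v i = v i + v j := by
                simp only [fire, hA']; push_cast; ring
              have leg1' : fire n j v i < -1 := by
                rw [hfji]; nlinarith [hvi, hvj]
              have leg2' : fire n i (fire n j v) j < -1 := by
                rw [fire_adj_i j i (by rw [← A_symm]; exact hA) v]; exact hvi
              have hbr := fire_braid i j hA v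
              have habs : IsPlay n (-1) (fire n j v) (i :: j :: t) := by
                refine ⟨leg1', leg2', ?_⟩
                rw [← hbr]
                exact ht
              have hres : playResult n (fire n j v) (i :: j :: t)
                  = playResult n v (i :: p') := by
                simp only [playResult_cons]
                rw [← hbr]
                have : playResult n (fire n i (fire n j (fire n i v))) t
                    = playResult n (fire n i v) ([j, i] ++ t) := by
                  simp [playResult_append]
                rw [this, h2]
              have hlen2 : (i :: j :: t).length = L := by
                simpa using h3
              have hterm2 : ∀ k, -1 ≤ playResult n (fire n j v) (i :: j :: t) k := by
                rw [hres]; intro k; exact hterm k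
              obtain ⟨s, g1, g2, g3⟩ := ih (fire n j v) (i :: j :: t) habs hterm2 hlen2 q' hq'
              refine ⟨s, ⟨hvj, g1⟩, ?_, by simpa using g3⟩
              rw [show playResult n v ((j :: q') ++ s) = playResult n (fire n j v) (q' ++ s) from rfl,
                g2, hres]
          · -- commuting case
            have hA' : A n j i = 0 := by rw [← A_symm]; exact hA
            have hfij : fire n i v j = v j := by
              simp only [fire, hA]; push_cast; ring
            have leg1 : fire n i v j < -1 := by rw [hfij]; exact hvj
            obtain ⟨s1, h1, h2, h3⟩ := ih (fire n i v) p' hp' hterm hlen' [j] ⟨leg1, trivial⟩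
            match s1, h1, h2, h3 with
            | t, ⟨_, ht⟩, h2, h3 =>
              have hfji : fire n j v i = v i := by
                simp only [fire, hA']; push_cast; ring
              have leg1' : fire n j v i < -1 := by rw [hfji]; exact hvi
              have hcm := fire_comm i j hA v
              have habs : IsPlay n (-1) (fire n j v) (i :: t) := by
                refine ⟨leg1', ?_⟩
                rw [hcm]
                exact ht
              have hres : playResult n (fire n j v) (i :: t)
                  = playResult n v (i :: p') := by
                simp only [playResult_cons]
                rw [hcm]
                have : playResult n (fire n j (fire n i v)) t
                    = playResult n (fire n i v) ([j] ++ t) := by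
                  simp [playResult_append]
                rw [this, h2]
              have hlen2 : (i :: t).length = L := by simpa using h3
              have hterm2 : ∀ k, -1 ≤ playResult n (fire n j v) (i :: t) k := by
                rw [hres]; intro k; exact hterm k
              obtain ⟨s, g1, g2, g3⟩ := ih (fire n j v) (i :: t) habs hterm2 hlen2 q' hq'
              refine ⟨s, ⟨hvj, g1⟩, ?_, by simpa using g3⟩
              rw [show playResult n v ((j :: q') ++ s) = playResult n (fire n j v) (q' ++ s) from rfl,
                g2, hres]

/- ### the Y-model -/

def vof (Y : ZMod n → ℤ) : ZMod n → ℝ := fun j => (Y j : ℝ) - (Y (j+1) : ℝ)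

def swapY (i : ZMod n) (Y : ZMod n → ℤ) : ZMod n → ℤ :=
  fun z => if z = i then Y (i+1) else if z = i+1 then Y i else Y z

lemma zmod1nz (hn : 3 ≤ n) : (1 : ZMod n) ≠ 0 := by
  intro h0
  have : ((1:ℕ) : ZMod n) = 0 := by exact_mod_cast h0
  have := (ZMod.natCast_eq_zero_iff 1 n).mp this
  have := Nat.le_of_dvd one_pos this
  omega

lemma zmod2nz (hn : 3 ≤ n) : (2 : ZMod n) ≠ 0 := by
  intro h0
  have : ((2:ℕ) : ZMod n) = 0 := by exact_mod_cast h0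
  have := (ZMod.natCast_eq_zero_iff 2 n).mp this
  have := Nat.le_of_dvd two_pos this
  omega

lemma swapY_left (i : ZMod n) (Y : ZMod n → ℤ) : swapY i Y i = Y (i+1) := by simp [swapY]

lemma swapY_right (hn : 3 ≤ n) (i : ZMod n) (Y : ZMod n → ℤ) : swapY i Y (i+1) = Y i := by
  have e1 : i + 1 ≠ i := by intro h; apply zmod1nz hn; linear_combination h
  show (if i + 1 = i then Y (i+1) else if i + 1 = i + 1 then Y i else Y (i+1)) = Y i
  rw [if_neg e1, if_pos rfl]

lemma swapY_other (i : ZMod n) (Y : ZMod n → ℤ) (x : ZMod n) (h1 : x ≠ i) (h2 : x ≠ i + 1) :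
    swapY i Y x = Y x := by
  simp only [swapY, if_neg h1, if_neg h2]

lemma fire_vof (hn : 3 ≤ n) (i : ZMod n) (Y : ZMod n → ℤ) :
    fire n i (vof Y) = vof (swapY i Y) := by
  have h1 := zmod1nz hn
  have h2 := zmod2nz hn
  have e1 : i + 1 ≠ i := by intro h; apply h1; linear_combination h
  have e2 : i + 2 ≠ i := by intro h; apply h2; linear_combination h
  have e3 : i + 2 ≠ i + 1 := by intro h; apply h1; linear_combination h
  have e4 : i - 1 ≠ i := by intro h; apply h1; linear_combination -h
  have e5 : i - 1 ≠ i + 1 := by intro h; apply h2; linear_combination -h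
  funext x
  by_cases hx1 : x = i
  · subst hx1
    have hA : A n x x = 2 := A_self x
    simp only [fire, vof, hA, swapY_left, swapY_right hn]
    push_cast; ring
  · by_cases hx2 : x = i + 1
    · subst hx2
      have hA : A n i (i+1) = -1 := by
        unfold A
        rw [if_neg (fun h => e1 h.symm), if_pos (Or.inl rfl)]
      have hrw : i + 1 + 1 = i + 2 := by ring
      simp only [fire, vof, hA, hrw, swapY_right hn, swapY_other i Y (i+2) e2 e3]
      push_cast; ring
    · by_cases hx3 : x = i - 1
      · subst hx3
        have hA : A n i (i-1) = -1 := by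
          unfold A
          rw [if_neg (fun h => e4 h.symm), if_pos (Or.inr rfl)]
        have hrw : i - 1 + 1 = i := by ring
        simp only [fire, vof, hA, hrw, swapY_left, swapY_other i Y (i-1) e4 e5]
        push_cast; ring
      · have hA : A n i x = 0 := by
          unfold A
          rw [if_neg (fun h => hx1 h.symm), if_neg]
          rintro (h | h)
          · exact hx2 h
          · exact hx3 h
        have hx4 : x + 1 ≠ i := by
          intro h; apply hx3; rw [← h]; ring
        have hx5 : x + 1 ≠ i + 1 := by
          intro h; apply hx1
          have : x + 1 - 1 = i + 1 - 1 := by rw [h]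
          simpa using this
        simp only [fire, vof, hA, swapY_other i Y x hx1 hx2, swapY_other i Y (x+1) hx4 hx5]
        push_cast; ring

lemma vof_lt_neg_one (Y : ZMod n → ℤ) (i : ZMod n) (h : Y i + 2 ≤ Y (i+1)) :
    vof Y i < -1 := by
  simp only [vof]
  have : (Y i : ℝ) + 2 ≤ (Y (i+1) : ℝ) := by exact_mod_cast h
  linarith

def shiftY (Y : ZMod n → ℤ) (s : ZMod n) (L : ℕ) : ZMod n → ℤ :=
  fun x => if (x - s).val < L then Y (x+1) else if x = s + (L:ℕ) then Y s else Y x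

def runL (n : ℕ) (s : ZMod n) (L : ℕ) : List (ZMod n) :=
  (List.range L).map (fun t => s + (t:ℕ))

@[simp] lemma runL_length (s : ZMod n) (L : ℕ) : (runL n s L).length = L := by
  simp [runL]

lemma cast_val_eq (w : ZMod n) : ((w.val : ℕ) : ZMod n) = w := ZMod.natCast_rightInverse w

lemma eq_of_val_sub_eq (x s : ZMod n) (L : ℕ) (h : (x - s).val = L) :
    x = s + (L:ℕ) := by
  have : x - s = ((L:ℕ) : ZMod n) := by rw [← h, cast_val_eq]
  rw [← this]; ring

lemma val_sub_self_add (s : ZMod n) (L : ℕ) (hL : L < n) : ((s + (L:ℕ)) - s).val = L := by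
  have : (s + (L:ℕ)) - s = ((L:ℕ) : ZMod n) := by ring
  rw [this, ZMod.val_natCast, Nat.mod_eq_of_lt hL]

lemma shiftY_lt (Y : ZMod n → ℤ) (s x : ZMod n) (L : ℕ) (h : (x - s).val < L) :
    shiftY Y s L x = Y (x+1) := by simp only [shiftY, if_pos h]

lemma shiftY_top (Y : ZMod n → ℤ) (s : ZMod n) (L : ℕ) (hL : L < n) :
    shiftY Y s L (s + (L:ℕ)) = Y s := by
  simp only [shiftY]
  rw [if_neg (by rw [val_sub_self_add s L hL]; omega)]
  simp

lemma shiftY_other (Y : ZMod n → ℤ) (s x : ZMod n) (L : ℕ)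
    (h1 : ¬ (x - s).val < L) (h2 : x ≠ s + (L:ℕ)) :
    shiftY Y s L x = Y x := by
  simp only [shiftY, if_neg h1, if_neg h2]

lemma shift_succ (hn : 3 ≤ n) (Y : ZMod n → ℤ) (s : ZMod n) (L : ℕ) (hL : L + 1 ≤ n - 2) :
    swapY (s + ((L:ℕ) : ZMod n)) (shiftY Y s L) = shiftY Y s (L+1) := by
  have h1 := zmod1nz hn
  have hLn : L < n := by omega
  have hL1n : L + 1 < n := by omega
  have hcast : (((L+1):ℕ) : ZMod n) = ((L:ℕ) : ZMod n) + 1 := by push_cast; ring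
  have hvL1 : ((s + (L:ℕ) + 1) - s).val = L + 1 := by
    have h : s + (L:ℕ) + 1 = s + (((L+1):ℕ) : ZMod n) := by rw [hcast]; ring
    rw [h, val_sub_self_add s (L+1) hL1n]
  have hne : s + (L:ℕ) + 1 ≠ s + (L:ℕ) := by
    intro h; apply h1; linear_combination h
  funext x
  by_cases hx1 : x = s + (L:ℕ)
  · subst hx1
    rw [swapY_left, shiftY_lt Y s _ (L+1) (by rw [val_sub_self_add s L hLn]; omega),
      shiftY_other Y s _ L (by rw [hvL1]; omega) hne]
  · by_cases hx2 : x = s + (L:ℕ) + 1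
    · subst hx2
      rw [swapY_right hn, shiftY_top Y s L hLn]
      have hre : s + (L:ℕ) + 1 = s + (((L+1):ℕ) : ZMod n) := by rw [hcast]; ring
      rw [hre, shiftY_top Y s (L+1) hL1n]
    · have heL : (x - s).val ≠ L := fun h => hx1 (eq_of_val_sub_eq x s L h)
      have heL1 : (x - s).val ≠ L + 1 := by
        intro h
        have := eq_of_val_sub_eq x s (L+1) h
        rw [hcast] at this
        exact hx2 (by rw [this]; ring)
      rw [swapY_other _ _ x hx1 hx2]
      by_cases he : (x - s).val < L
      · rw [shiftY_lt Y s x L he, shiftY_lt Y s x (L+1) (by omega)]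
      · rw [shiftY_other Y s x L he hx1,
          shiftY_other Y s x (L+1) (by omega) (by rw [hcast]; intro h; exact hx2 (by rw [h]; ring))]

lemma run_spec (hn : 3 ≤ n) :
    ∀ (L : ℕ), L ≤ n - 2 → ∀ (Y : ZMod n → ℤ) (s : ZMod n),
      (∀ t : ℕ, t < L → Y s + 2 ≤ Y (s + 1 + (t:ℕ))) →
      IsPlay n (-1) (vof Y) (runL n s L) ∧
        playResult n (vof Y) (runL n s L) = vof (shiftY Y s L) := by
  intro L
  induction L with
  | zero =>
    intro _ Y s _
    constructor
    · simp [runL]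
    · simp only [runL, List.range_zero, List.map_nil, playResult_nil]
      have h0 : shiftY Y s 0 = Y := by
        funext x
        simp only [shiftY, Nat.not_lt_zero, if_false]
        by_cases hx : x = s + ((0:ℕ) : ZMod n)
        · rw [if_pos hx, hx]
          norm_num
        · rw [if_neg hx]
      rw [h0]
  | succ L ih =>
    intro hL Y s hyp
    have hL' : L ≤ n - 2 := by omega
    have hLn : L < n := by omega
    obtain ⟨hplay, hres⟩ := ih hL' Y s (fun t ht => hyp t (by omega))
    have hsplit : runL n s (L+1) = runL n s L ++ [s + (L:ℕ)] := by
      simp [runL, List.range_succ]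
    have hval : vof (shiftY Y s L) (s + (L:ℕ)) < -1 := by
      apply vof_lt_neg_one
      rw [shiftY_top Y s L hLn]
      have h2 : s + (L:ℕ) + 1 = s + 1 + (L:ℕ) := by ring
      rw [shiftY_other Y s _ L ?g1 ?g2, h2]
      · exact hyp L (by omega)
      case g1 =>
        have hvL1 : ((s + (L:ℕ) + 1) - s).val = L + 1 := by
          have hcast : (((L+1):ℕ) : ZMod n) = ((L:ℕ) : ZMod n) + 1 := by push_cast; ring
          have h : s + (L:ℕ) + 1 = s + (((L+1):ℕ) : ZMod n) := by rw [hcast]; ring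
          rw [h, val_sub_self_add s (L+1) (by omega)]
        rw [hvL1]; omega
      case g2 =>
        intro h
        apply zmod1nz hn
        linear_combination h
    constructor
    · rw [hsplit, IsPlay_append]
      refine ⟨hplay, ?_⟩
      rw [hres]
      exact ⟨hval, trivial⟩
    · rw [hsplit, playResult_append, hres]
      show fire n (s + (L:ℕ)) (vof (shiftY Y s L)) = _
      rw [fire_vof hn, shift_succ hn Y s L hL]
/- ### the explicit play: states -/

def akk (n k : ℕ) : ZMod n := -((((k - 1) + k.choose 2 : ℕ)) : ZMod n)

def Mst (n k j : ℕ) (x : ZMod n) : ℤ :=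
  if (x - akk n k).val < j then ((x - akk n k).val : ℤ)
  else if j + (n-1-k) ≤ (x - akk n k).val then ((x - akk n k).val : ℤ) - ((n-1-k : ℕ) : ℤ)
  else ((n - 1 - ((x - akk n k).val - j) : ℕ) : ℤ)

lemma Mst_eval (n k j : ℕ) (x : ZMod n) (u : ℕ) (hu : (x - akk n k).val = u) :
    Mst n k j x = if u < j then ((u:ℕ) : ℤ)
      else if j + (n-1-k) ≤ u then ((u:ℕ) : ℤ) - ((n-1-k : ℕ) : ℤ)
      else ((n - 1 - (u - j) : ℕ) : ℤ) := by
  rw [Mst, hu]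

lemma val_add_nat (w : ZMod n) (t : ℕ) : (w + (t:ℕ)).val = (w.val + t) % n := by
  have h : w + (t:ℕ) = (((w.val + t) : ℕ) : ZMod n) := by
    push_cast [cast_val_eq]
    ring
  rw [h, ZMod.val_natCast]

lemma val_sub_nat (w : ZMod n) (t : ℕ) (ht : t < n) :
    (w - (t:ℕ)).val = (w.val + (n - t)) % n := by
  have h : w - (t:ℕ) = (((w.val + (n - t)) : ℕ) : ZMod n) := by
    push_cast [cast_val_eq, Nat.cast_sub ht.le, ZMod.natCast_self]
    ring
  rw [h, ZMod.val_natCast]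

lemma mod_two_cases (a : ℕ) (h : a < 2*n) :
    (a < n ∧ a % n = a) ∨ (n ≤ a ∧ a % n = a - n) := by
  rcases Nat.lt_or_ge a n with h' | h'
  · exact Or.inl ⟨h', Nat.mod_eq_of_lt h'⟩
  · right
    refine ⟨h', ?_⟩
    rw [Nat.mod_eq_sub_mod h', Nat.mod_eq_of_lt (by omega)]

/-- legality of the runs -/
lemma Mst_leg (hn : 3 ≤ n) (k j : ℕ) (hk1 : 1 ≤ k) (hk2 : k ≤ n-2) (hj : j + 1 ≤ k)
    (t : ℕ) (ht : t < n-1-k) :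
    Mst n k (j+1) (akk n k + ((j:ℕ) : ZMod n)) + 2
      ≤ Mst n k (j+1) (akk n k + ((j:ℕ) : ZMod n) + 1 + ((t:ℕ) : ZMod n)) := by
  have hval1 : ((akk n k + ((j:ℕ):ZMod n)) - akk n k).val = j := by
    have h : (akk n k + ((j:ℕ):ZMod n)) - akk n k = ((j:ℕ) : ZMod n) := by ring
    rw [h, ZMod.val_natCast, Nat.mod_eq_of_lt (by omega)]
  have hval2 : ((akk n k + ((j:ℕ):ZMod n) + 1 + ((t:ℕ):ZMod n)) - akk n k).val = j + 1 + t := by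
    have h : (akk n k + ((j:ℕ):ZMod n) + 1 + ((t:ℕ):ZMod n)) - akk n k
        = (((j + 1 + t : ℕ)) : ZMod n) := by push_cast; ring
    rw [h, ZMod.val_natCast, Nat.mod_eq_of_lt (by omega)]
  have h1 : Mst n k (j+1) (akk n k + ((j:ℕ) : ZMod n)) = ((j:ℕ) : ℤ) := by
    rw [Mst_eval n k (j+1) _ j hval1, if_pos (by omega)]
  have h2 : Mst n k (j+1) (akk n k + ((j:ℕ) : ZMod n) + 1 + ((t:ℕ) : ZMod n))
      = ((n - 1 - t : ℕ) : ℤ) := by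
    rw [Mst_eval n k (j+1) _ (j+1+t) hval2, if_neg (by omega), if_neg (by omega)]
    congr 1
    omega
  rw [h1, h2]
  push_cast
  omega

/-- effect of one run -/
lemma Mst_shift (hn : 3 ≤ n) (k j : ℕ) (hk1 : 1 ≤ k) (hk2 : k ≤ n-2) (hj : j + 1 ≤ k) :
    shiftY (Mst n k (j+1)) (akk n k + ((j:ℕ):ZMod n)) (n-1-k) = Mst n k j := by
  funext x
  obtain ⟨u, hu⟩ : ∃ u, (x - akk n k).val = u := ⟨_, rfl⟩
  have hun : u < n := hu ▸ ZMod.val_lt _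
  have hw : x - (akk n k + ((j:ℕ):ZMod n)) = (x - akk n k) - ((j:ℕ) : ZMod n) := by ring
  have he : (x - (akk n k + ((j:ℕ):ZMod n))).val = (u + (n - j)) % n := by
    rw [hw, val_sub_nat _ j (by omega), hu]
  have hx1 : ((x + 1) - akk n k) = (x - akk n k) + ((1:ℕ) : ZMod n) := by push_cast; ring
  have hvx1 : ((x + 1) - akk n k).val = (u + 1) % n := by
    rw [hx1, val_add_nat, hu]
  by_cases hlt : (x - (akk n k + ((j:ℕ):ZMod n))).val < n-1-k
  · -- within the run: shift reads one to the right
    rw [shiftY_lt _ _ _ _ hlt]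
    rw [he] at hlt
    rcases mod_two_cases (n := n) (u + (n - j)) (by omega) with ⟨hc, heq⟩ | ⟨hc, heq⟩
    · rw [heq] at hlt
      omega
    · rw [heq] at hlt
      have hju : j ≤ u := by omega
      have hud : u < j + (n-1-k) := by omega
      have hu1 : ((x + 1) - akk n k).val = u + 1 := by
        rw [hvx1, Nat.mod_eq_of_lt (by omega)]
      have hL : Mst n k (j+1) (x+1) = ((n - 1 - (u - j) : ℕ) : ℤ) := by
        rw [Mst_eval n k (j+1) _ (u+1) hu1, if_neg (by omega), if_neg (by omega)]
        congr 1
        omega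
      have hR : Mst n k j x = ((n - 1 - (u - j) : ℕ) : ℤ) := by
        rw [Mst_eval n k j x u hu, if_neg (by omega), if_neg (by omega)]
      rw [hL, hR]
  · by_cases hx : x = (akk n k + ((j:ℕ):ZMod n)) + (((n-1-k) : ℕ) : ZMod n)
    · rw [hx, shiftY_top _ _ _ (by omega)]
      have hv1 : (((akk n k + ((j:ℕ):ZMod n)) + (((n-1-k):ℕ) : ZMod n)) - akk n k).val
          = j + (n-1-k) := by
        have h : ((akk n k + ((j:ℕ):ZMod n)) + (((n-1-k):ℕ):ZMod n)) - akk n k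
            = (((j + (n-1-k) : ℕ)) : ZMod n) := by push_cast; ring
        rw [h, ZMod.val_natCast, Nat.mod_eq_of_lt (by omega)]
      have hv2 : ((akk n k + ((j:ℕ):ZMod n)) - akk n k).val = j := by
        have h : (akk n k + ((j:ℕ):ZMod n)) - akk n k = ((j:ℕ) : ZMod n) := by ring
        rw [h, ZMod.val_natCast, Nat.mod_eq_of_lt (by omega)]
      have hL : Mst n k (j+1) (akk n k + ((j:ℕ):ZMod n)) = ((j:ℕ) : ℤ) := by
        rw [Mst_eval n k (j+1) _ j hv2, if_pos (by omega)]
      have hR : Mst n k j ((akk n k + ((j:ℕ):ZMod n)) + (((n-1-k):ℕ) : ZMod n)) = ((j:ℕ):ℤ) := by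
        rw [Mst_eval n k j _ (j + (n-1-k)) hv1, if_neg (by omega), if_pos (by omega)]
        push_cast
        omega
      rw [hL, hR]
    · rw [shiftY_other _ _ _ _ hlt hx]
      have hed : (x - (akk n k + ((j:ℕ):ZMod n))).val ≠ n-1-k := by
        intro h
        exact hx (eq_of_val_sub_eq x _ (n-1-k) h)
      rw [he] at hlt hed
      rcases mod_two_cases (n := n) (u + (n - j)) (by omega) with ⟨hc, heq⟩ | ⟨hc, heq⟩
      · rw [heq] at hlt hed
        have huj : u < j := by omega
        rw [Mst_eval n k (j+1) x u hu, Mst_eval n k j x u hu,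
          if_pos (by omega), if_pos (by omega)]
      · rw [heq] at hlt hed
        have hud : j + (n-1-k) + 1 ≤ u := by omega
        rw [Mst_eval n k (j+1) x u hu, Mst_eval n k j x u hu, if_neg (by omega),
          if_pos (by omega), if_neg (by omega), if_pos (by omega)]

/-- passing from round `k` to round `k+1` -/
lemma Mst_boundary (hn : 3 ≤ n) (k : ℕ) (hk1 : 1 ≤ k) (hk2 : k + 1 ≤ n-2) :
    Mst n k 0 = Mst n (k+1) (k+1) := by
  have hak : akk n (k+1) = akk n k - (((k+1):ℕ) : ZMod n) := by
    have h : (k + 1 - 1) + (k+1).choose 2 = ((k - 1) + k.choose 2) + (k+1) := by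
      rw [Nat.choose_succ_succ]
      simp [Nat.choose_one_right]
      omega
    rw [akk, akk, h]
    push_cast
    ring
  funext x
  obtain ⟨u, hu⟩ : ∃ u, (x - akk n k).val = u := ⟨_, rfl⟩
  have hun : u < n := hu ▸ ZMod.val_lt _
  have hw : x - akk n (k+1) = (x - akk n k) + (((k+1):ℕ) : ZMod n) := by
    rw [hak]; ring
  have hv : (x - akk n (k+1)).val = (u + (k+1)) % n := by
    rw [hw, val_add_nat, hu]
  rcases mod_two_cases (n := n) (u + (k+1)) (by omega) with ⟨hc, heq⟩ | ⟨hc, heq⟩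
  · rw [heq] at hv
    by_cases hbig : u + (k+1) = n - 1
    · rw [Mst_eval n k 0 x u hu, Mst_eval n (k+1) (k+1) x (u + (k+1)) hv,
        if_neg (by omega), if_neg (by omega), if_neg (by omega), if_pos (by omega)]
      push_cast
      omega
    · rw [Mst_eval n k 0 x u hu, Mst_eval n (k+1) (k+1) x (u + (k+1)) hv,
        if_neg (by omega), if_neg (by omega), if_neg (by omega), if_neg (by omega)]
      congr 1
      omega
  · rw [heq] at hv
    rw [Mst_eval n k 0 x u hu, Mst_eval n (k+1) (k+1) x (u + (k+1) - n) hv,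
      if_neg (by omega), if_pos (by omega), if_pos (by omega)]
    push_cast
    omega

/-- initial state -/
lemma Mst_init (hn : 3 ≤ n) : vof (Mst n 1 1) = rho n 0 := by
  have hak : akk n 1 = 0 := by
    rw [akk]
    norm_num
  funext x
  obtain ⟨u, hu'⟩ : ∃ u, x.val = u := ⟨_, rfl⟩
  have hun : u < n := hu' ▸ ZMod.val_lt _
  have hu : (x - akk n 1).val = u := by rw [hak, sub_zero, hu']
  have hx1 : ((x + 1) - akk n 1) = x + ((1:ℕ):ZMod n) := by rw [hak]; push_cast; ring
  have hv1 : ((x + 1) - akk n 1).val = (u + 1) % n := by rw [hx1, val_add_nat, hu']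
  have hx0 : x = 0 ↔ u = 0 := by
    rw [← hu', ZMod.val_eq_zero]
  show (Mst n 1 1 x : ℝ) - (Mst n 1 1 (x+1) : ℝ) = rho n 0 x
  rw [rho]
  by_cases h0 : x = 0
  · have hu0 : u = 0 := hx0.mp h0
    have hv1' : ((x + 1) - akk n 1).val = 1 := by rw [hv1, hu0, Nat.mod_eq_of_lt (by omega)]
    have hz : Mst n 1 1 x - Mst n 1 1 (x+1) = 1 - (n:ℤ) := by
      rw [Mst_eval n 1 1 x u hu, Mst_eval n 1 1 (x+1) 1 hv1', hu0,
        if_pos (by omega), if_neg (by omega), if_neg (by omega)]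
      push_cast
      omega
    rw [if_pos h0]
    exact_mod_cast hz
  · have hu0 : u ≠ 0 := fun h => h0 (hx0.mpr h)
    have hz : Mst n 1 1 x - Mst n 1 1 (x+1) = 1 := by
      by_cases htop : u = n - 1
      · have hv1' : ((x + 1) - akk n 1).val = 0 := by
          rw [hv1, htop]
          have h : n - 1 + 1 = n := by omega
          rw [h, Nat.mod_self]
        rw [Mst_eval n 1 1 x u hu, Mst_eval n 1 1 (x+1) 0 hv1', if_neg (by omega),
          if_pos (by omega), if_pos (by omega)]
        push_cast
        omega
      · have hv1' : ((x + 1) - akk n 1).val = u + 1 := by rw [hv1, Nat.mod_eq_of_lt (by omega)]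
        have c1 : ¬ (u < 1) := by omega
        have c2 : ¬ (1 + (n-1-1) ≤ u) := by omega
        have c3 : ¬ (u + 1 < 1) := by omega
        rw [Mst_eval n 1 1 x u hu, Mst_eval n 1 1 (x+1) (u+1) hv1',
          if_neg c1, if_neg c2, if_neg c3]
        by_cases hsec : 1 + (n-1-1) ≤ u + 1
        · rw [if_pos hsec]
          push_cast
          omega
        · rw [if_neg hsec]
          push_cast
          omega
    rw [if_neg h0]
    exact_mod_cast hz

/-- the location of the deep hole at the end -/
lemma akk_final (hn : 3 ≤ n) : akk n (n-2) = iota0 n := by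
  obtain ⟨a, rfl⟩ : ∃ a, n = a + 3 := ⟨n-3, by omega⟩
  have hkey : ((a+3) - 2 - 1) + ((a+3)-2).choose 2 = (a+3)*a/2 := by
    have h1 : (a+3) - 2 = a + 1 := by omega
    rw [h1, Nat.choose_two_right]
    have h2 : a + 1 - 1 = a := by omega
    rw [h2]
    have e1 : (a+3)*a = (a+1)*a + 2*a := by ring
    have hdvd : 2 ∣ (a+1)*a := by
      have := Nat.even_mul_succ_self a
      rw [mul_comm] at this
      exact this.two_dvd
    have h3 := Nat.div_mul_cancel hdvd
    have hdvd2 : 2 ∣ (a+3)*a := by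
      rw [e1]
      exact Nat.dvd_add hdvd ⟨a, rfl⟩
    have h4 := Nat.div_mul_cancel hdvd2
    omega
  rw [akk, hkey, iota0]
  have hz : (((a+3 : ℕ)) : ZMod (a+3)) = 0 := ZMod.natCast_self _
  have hca : ((a : ℕ) : ZMod (a+3)) = -3 := by
    push_cast at hz
    linear_combination hz
  rcases Nat.even_or_odd (a+3) with he | ho
  · rw [if_pos he]
    obtain ⟨m, hm⟩ := he
    have hm2 : (a+3) / 2 = m := by omega
    have hprod : (a+3)*a/2 = m * a := by
      have h5 : a + 3 = 2 * m := by omega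
      rw [show (a+3)*a = 2*(m*a) from by rw [h5]; ring,
        Nat.mul_div_cancel_left _ (by norm_num)]
    rw [hprod, hm2]
    have hzero : (2 : ZMod (a+3)) * (m : ZMod (a+3)) = 0 := by
      have h2m : ((2 * m : ℕ) : ZMod (a+3)) = (((a+3) : ℕ) : ZMod (a+3)) := by
        congr 1
        omega
      rw [hz] at h2m
      push_cast at h2m
      linear_combination h2m
    have hc : ((m * a : ℕ) : ZMod (a+3)) = (m : ZMod (a+3)) * (-3) := by
      push_cast [hca]
      ring
    rw [hc]
    linear_combination hzero
  · rw [if_neg (Nat.not_even_iff_odd.mpr ho)]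
    obtain ⟨m, hm⟩ := ho
    have h6 : a = 2 * (m-1) := by omega
    have hprod : (a+3)*a/2 = (a+3) * (m-1) := by
      rw [show (a+3)*a = 2*((a+3)*(m-1)) from by rw [h6]; ring,
        Nat.mul_div_cancel_left _ (by norm_num)]
    rw [hprod]
    push_cast [hz]
    ring

/-- final state -/
lemma Mst_final (hn : 3 ≤ n) : vof (Mst n (n-2) 0) = fun x => -(rho n (iota0 n) x) := by
  funext x
  obtain ⟨u, hu⟩ : ∃ u, (x - akk n (n-2)).val = u := ⟨_, rfl⟩
  have hun : u < n := hu ▸ ZMod.val_lt _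
  have hd : n - 1 - (n-2) = 1 := by omega
  have hx1 : ((x + 1) - akk n (n-2)) = (x - akk n (n-2)) + ((1:ℕ):ZMod n) := by push_cast; ring
  have hv1 : ((x + 1) - akk n (n-2)).val = (u + 1) % n := by rw [hx1, val_add_nat, hu]
  have hx0 : x = iota0 n ↔ u = 0 := by
    rw [← hu, ← akk_final hn, ZMod.val_eq_zero, sub_eq_zero]
  show (Mst n (n-2) 0 x : ℝ) - (Mst n (n-2) 0 (x+1) : ℝ) = -(rho n (iota0 n) x)
  rw [rho]
  by_cases h0 : x = iota0 n
  · have hu0 : u = 0 := hx0.mp h0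
    have hv1' : ((x + 1) - akk n (n-2)).val = 1 := by
      rw [hv1, hu0, Nat.mod_eq_of_lt (by omega)]
    have hz : Mst n (n-2) 0 x - Mst n (n-2) 0 (x+1) = (n:ℤ) - 1 := by
      rw [Mst_eval n (n-2) 0 x u hu, Mst_eval n (n-2) 0 (x+1) 1 hv1', hu0, hd,
        if_neg (by omega), if_neg (by omega), if_neg (by omega), if_pos (by omega)]
      push_cast
      omega
    rw [if_pos h0]
    have hgoal : ((Mst n (n-2) 0 x - Mst n (n-2) 0 (x+1) : ℤ) : ℝ) = ((n:ℤ) : ℝ) - 1 := by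
      exact_mod_cast congrArg (Int.cast : ℤ → ℝ) hz
    push_cast at hgoal
    push_cast
    linarith
  · have hu0 : u ≠ 0 := fun h => h0 (hx0.mpr h)
    have hz : Mst n (n-2) 0 x - Mst n (n-2) 0 (x+1) = -1 := by
      by_cases htop : u = n - 1
      · have hv1' : ((x + 1) - akk n (n-2)).val = 0 := by
          rw [hv1, htop]
          have h : n - 1 + 1 = n := by omega
          rw [h, Nat.mod_self]
        rw [Mst_eval n (n-2) 0 x u hu, Mst_eval n (n-2) 0 (x+1) 0 hv1', hd,
          if_neg (by omega), if_pos (by omega), if_neg (by omega), if_neg (by omega)]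
        push_cast
        omega
      · have hv1' : ((x + 1) - akk n (n-2)).val = u + 1 := by
          rw [hv1, Nat.mod_eq_of_lt (by omega)]
        rw [Mst_eval n (n-2) 0 x u hu, Mst_eval n (n-2) 0 (x+1) (u+1) hv1', hd,
          if_neg (by omega), if_pos (by omega), if_neg (by omega), if_pos (by omega)]
        push_cast
        omega
    rw [if_neg h0]
    exact_mod_cast hz
/- ### assembling the play -/

def roundTail (n k j : ℕ) : List (ZMod n) :=
  ((List.range j).reverse).flatMap (fun j' => runL n (akk n k + ((j':ℕ) : ZMod n)) (n-1-k))

lemma roundTail_spec (hn : 3 ≤ n) (k : ℕ) (hk1 : 1 ≤ k) (hk2 : k ≤ n-2) :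
    ∀ j, j ≤ k →
      IsPlay n (-1) (vof (Mst n k j)) (roundTail n k j) ∧
      playResult n (vof (Mst n k j)) (roundTail n k j) = vof (Mst n k 0) ∧
      (roundTail n k j).length = j * (n-1-k) := by
  intro j
  induction j with
  | zero =>
    intro _
    refine ⟨trivial, rfl, by simp [roundTail]⟩
  | succ j ih =>
    intro hj
    obtain ⟨ih1, ih2, ih3⟩ := ih (by omega)
    have hsplit : roundTail n k (j+1)
        = runL n (akk n k + ((j:ℕ) : ZMod n)) (n-1-k) ++ roundTail n k j := by
      simp [roundTail, List.range_succ]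
    obtain ⟨hrp, hrr⟩ := run_spec hn (n-1-k) (by omega) (Mst n k (j+1))
      (akk n k + ((j:ℕ) : ZMod n)) (fun t ht => Mst_leg hn k j hk1 hk2 hj t ht)
    rw [Mst_shift hn k j hk1 hk2 hj] at hrr
    refine ⟨?_, ?_, ?_⟩
    · rw [hsplit, IsPlay_append]
      exact ⟨hrp, by rw [hrr]; exact ih1⟩
    · rw [hsplit, playResult_append, hrr, ih2]
    · rw [hsplit, List.length_append, runL_length, ih3]
      ring

def playPre (n r : ℕ) : List (ZMod n) :=
  (List.range r).flatMap (fun k' => roundTail n (k'+1) (k'+1))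

lemma playPre_spec (hn : 3 ≤ n) :
    ∀ r, 1 ≤ r → r ≤ n-2 →
      IsPlay n (-1) (vof (Mst n 1 1)) (playPre n r) ∧
      playResult n (vof (Mst n 1 1)) (playPre n r) = vof (Mst n r 0) ∧
      (playPre n r).length = ∑ k' ∈ Finset.range r, (k'+1)*(n-1-(k'+1)) := by
  intro r
  induction r with
  | zero => omega
  | succ r ih =>
    intro _ hr2
    rcases Nat.eq_zero_or_pos r with rfl | hrpos
    · have h1 : playPre n 1 = roundTail n 1 1 := by
        show (List.range 1).flatMap (fun k' => roundTail n (k'+1) (k'+1)) = roundTail n 1 1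
        simp [List.range_succ]
      obtain ⟨h2, h3, h4⟩ := roundTail_spec hn 1 le_rfl (by omega) 1 le_rfl
      refine ⟨by rw [h1]; exact h2, by rw [h1]; exact h3, ?_⟩
      rw [h1, h4]
      rfl
    · obtain ⟨ih1, ih2, ih3⟩ := ih hrpos (by omega)
      have hsplit : playPre n (r+1) = playPre n r ++ roundTail n (r+1) (r+1) := by
        rw [playPre, playPre, List.range_succ]
        simp
      have hbd : Mst n r 0 = Mst n (r+1) (r+1) := Mst_boundary hn r hrpos hr2
      obtain ⟨h2, h3, h4⟩ := roundTail_spec hn (r+1) (by omega) hr2 (r+1) le_rfl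
      refine ⟨?_, ?_, ?_⟩
      · rw [hsplit, IsPlay_append]
        refine ⟨ih1, ?_⟩
        rw [ih2, hbd]
        exact h2
      · rw [hsplit, playResult_append, ih2, hbd, h3]
      · rw [hsplit, List.length_append, ih3, h4, Finset.sum_range_succ]

lemma sum_cube : ∀ m : ℕ, (∑ x ∈ Finset.range m, (x+1)*(m-x)) = (m+2).choose 3 := by
  intro m
  induction m with
  | zero => simp
  | succ m ih =>
    have h1 : ∀ x ∈ Finset.range (m+1), (x+1)*(m+1-x) = (x+1)*(m-x) + (x+1) := by
      intro x hx
      have := Finset.mem_range.mp hx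
      have h : m+1-x = (m-x)+1 := by omega
      rw [h, Nat.mul_succ]
    rw [Finset.sum_congr rfl h1, Finset.sum_add_distrib]
    have h2 : (∑ x ∈ Finset.range (m+1), (x+1)*(m-x)) = ∑ x ∈ Finset.range m, (x+1)*(m-x) := by
      rw [Finset.sum_range_succ]
      simp
    have h3 : ∀ N : ℕ, (∑ x ∈ Finset.range N, (x+1)) = (N+1).choose 2 := by
      intro N
      induction N with
      | zero => simp
      | succ N ihN =>
        rw [Finset.sum_range_succ, ihN]
        have h5 : (N+1+1).choose 2 = (N+1).choose 1 + (N+1).choose 2 :=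
          Nat.choose_succ_succ (N+1) 1
        rw [Nat.choose_one_right] at h5
        omega
    rw [h2, h3 (m+1), ih]
    have h4 : (m+1+2).choose 3 = (m+2).choose 2 + (m+2).choose 3 :=
      Nat.choose_succ_succ (m+2) 2
    have h8 : (m+1+1).choose 2 = (m+2).choose 2 := rfl
    omega

end Machinery

/-- Every `(<-1)`-play from `ρ^(0)` ending at a configuration with no coordinate `< -1`
ends at `-ρ^(ι0)` and has length exactly `binomial(n,3)`; moreover such a play exists. -/
theorem strategy_from_rho_zero (n : ℕ) [NeZero n] (hn : 3 ≤ n) :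
    (∃ p : List (ZMod n), IsPlay n (-1) (rho n 0) p ∧
      ∀ j, -1 ≤ playResult n (rho n 0) p j) ∧
    (∀ p : List (ZMod n), IsPlay n (-1) (rho n 0) p →
      (∀ j, -1 ≤ playResult n (rho n 0) p j) →
      playResult n (rho n 0) p = (fun j => -(rho n (iota0 n) j)) ∧
      p.length = n.choose 3) := by
  have hterm : ∀ j : ZMod n, -1 ≤ -(rho n (iota0 n) j) := by
    intro j
    rw [rho]
    split_ifs
    · have h0 : (0:ℝ) ≤ (n:ℝ) := Nat.cast_nonneg n
      linarith
    · norm_num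
  obtain ⟨hplay, hres, hlen⟩ := playPre_spec hn (n-2) (by omega) le_rfl
  rw [Mst_init hn] at hplay hres
  rw [Mst_final hn] at hres
  have hlen' : (playPre n (n-2)).length = n.choose 3 := by
    rw [hlen, Finset.sum_congr rfl (fun x hx => ?_), sum_cube (n-2)]
    · congr 1
      omega
    · have := Finset.mem_range.mp hx
      congr 1
      omega
  have htermP : ∀ j, -1 ≤ playResult n (rho n 0) (playPre n (n-2)) j := by
    rw [hres]
    exact hterm
  constructor
  · exact ⟨playPre n (n-2), hplay, htermP⟩
  · intro p hp hpterm
    obtain ⟨s, hs1, hs2, hs3⟩ := conf (n.choose 3) (rho n 0) (playPre n (n-2)) hplay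
      htermP hlen' p hp
    have hsnil : s = [] := by
      cases s with
      | nil => rfl
      | cons i s' =>
        have h := (IsPlay_append _ _ _ _).mp hs1
        exact absurd (hpterm i) (not_le.mpr h.2.1)
    subst hsnil
    rw [List.append_nil] at hs2 hs3
    exact ⟨hs2.trans hres, hs3⟩
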